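/- arXiv:2409.07142 — 6 statements merged into one kernel-verified Lean document; each statement's English description precedes it below -/
import Mathlib

section
/- Let δ ∈ [0, 1/2]. Let f be a randomized learning-augmented mechanism for two agents on the line that receives a profile x = (x₁,x₂) ∈ ℝ² together with a prediction x̂ = (x̂₁,x̂₂) ∈ ℝ² of the two agents' locations, is anonymous (f((x₁,x₂),(x̂₁,x̂₂)) = f((x₂,x₁),(x̂₂,x̂₁))), and is truthful in expectation for every fixed prediction. If f is (1+δ)-consistent, i.e. C(f(x,x),x) ≤ (1+δ)·opt(x) for every profile x, then f cannot be better than (2−δ)-robust: there exist a profile x with opt(x) > 0 and a prediction x̂ ∈ ℝ² such that C(f(x,x̂),x) ≥ (2−δ)·opt(x). -/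
/-!
The egalitarian cost of a lottery on the profile `a ≤ b` is its mean distance to the midpoint
plus `(b - a) / 2`. Fix the prediction `(0, 1)`. Consistency at `(0, 1)` puts the outcome within
mean distance `δ / 2` of `1 / 2`; agent 1 at `1 / 2` may not gain by reporting `0`, so the same
holds at `(1 / 2, 1)`, whence the mean distance to `1` there is at least `(1 - δ) / 2`. Agent 2 at
`1` may not gain by reporting `3 / 2`, so at `(1 / 2, 3 / 2)`, whose midpoint is `1`, the cost is
at least `(1 - δ) / 2 + 1 / 2 = (2 - δ) · opt`.
-/

open MeasureTheory

section AbsoluteDeviation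

variable {μ : Measure ℝ}

lemma integrable_abs_sub_of_integrable_abs [IsFiniteMeasure μ]
    (hμ : Integrable (fun y => |y|) μ) (c : ℝ) : Integrable (fun y => |y - c|) μ :=
  (((integrable_norm_iff aestronglyMeasurable_id).1 hμ).sub (integrable_const c)).abs

lemma max_abs_sub_eq_abs_sub_midpoint_add {a b : ℝ} (hab : a ≤ b) (y : ℝ) :
    max |y - a| |y - b| = |y - (a + b) / 2| + (b - a) / 2 := by
  rcases le_total y ((a + b) / 2) with hy | hy
  · rw [max_eq_right (by rw [abs_le]; constructor <;> cases abs_cases (y - b) <;> linarith),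
      abs_of_nonpos (by linarith : y - b ≤ 0), abs_of_nonpos (by linarith : y - (a + b) / 2 ≤ 0)]
    ring
  · rw [max_eq_left (by rw [abs_le]; constructor <;> cases abs_cases (y - a) <;> linarith),
      abs_of_nonneg (by linarith : 0 ≤ y - a), abs_of_nonneg (by linarith : 0 ≤ y - (a + b) / 2)]
    ring

lemma integral_max_abs_sub_eq [IsProbabilityMeasure μ] (hμ : Integrable (fun y => |y|) μ)
    {a b : ℝ} (hab : a ≤ b) :
    ∫ y, max |y - a| |y - b| ∂μ = ∫ y, |y - (a + b) / 2| ∂μ + (b - a) / 2 := by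
  simp_rw [max_abs_sub_eq_abs_sub_midpoint_add hab]
  rw [integral_add (integrable_abs_sub_of_integrable_abs hμ _) (integrable_const _),
    integral_const, probReal_univ, one_smul]

lemma abs_sub_le_integral_abs_sub_add_integral_abs_sub [IsProbabilityMeasure μ]
    (hμ : Integrable (fun y => |y|) μ) (a b : ℝ) :
    |a - b| ≤ ∫ y, |y - a| ∂μ + ∫ y, |y - b| ∂μ := by
  rw [← integral_add (integrable_abs_sub_of_integrable_abs hμ a)
    (integrable_abs_sub_of_integrable_abs hμ b)]
  calc |a - b| = ∫ _, |a - b| ∂μ := by rw [integral_const, probReal_univ, one_smul]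
    _ ≤ ∫ y, (|y - a| + |y - b|) ∂μ :=
      integral_mono (integrable_const _) ((integrable_abs_sub_of_integrable_abs hμ a).add
        (integrable_abs_sub_of_integrable_abs hμ b)) fun y =>
          (abs_sub_le a y b).trans_eq (by rw [abs_sub_comm a y])

end AbsoluteDeviation

theorem stmt0_general
    (δ : ℝ)
    (f : ℝ × ℝ → ℝ × ℝ → Measure ℝ)
    (hprob : ∀ x p, IsProbabilityMeasure (f x p))
    (hmom : ∀ x p, Integrable (fun y => |y|) (f x p))
    (htruth1 : ∀ (p : ℝ × ℝ) (x₁ x₂ x₁' : ℝ),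
      ∫ y, |y - x₁| ∂(f (x₁, x₂) p) ≤ ∫ y, |y - x₁| ∂(f (x₁', x₂) p))
    (htruth2 : ∀ (p : ℝ × ℝ) (x₁ x₂ x₂' : ℝ),
      ∫ y, |y - x₂| ∂(f (x₁, x₂) p) ≤ ∫ y, |y - x₂| ∂(f (x₁, x₂') p))
    (hcons : ∀ x : ℝ × ℝ,
      ∫ y, max |y - x.1| |y - x.2| ∂(f x x) ≤ (1 + δ) * (|x.1 - x.2| / 2)) :
    ∃ x p : ℝ × ℝ, 0 < |x.1 - x.2| / 2 ∧
      (2 - δ) * (|x.1 - x.2| / 2) ≤ ∫ y, max |y - x.1| |y - x.2| ∂(f x p) := by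
  have := hprob
  refine ⟨(1 / 2, 3 / 2), (0, 1), by norm_num, ?_⟩
  have consistent : ∫ y, |y - 1 / 2| ∂(f (0, 1) (0, 1)) ≤ δ / 2 := by
    have h := hcons (0, 1)
    rw [integral_max_abs_sub_eq (hmom _ _) zero_le_one] at h
    norm_num at h ⊢
    linarith
  have near_half : ∫ y, |y - 1 / 2| ∂(f (1 / 2, 1) (0, 1)) ≤ δ / 2 :=
    (htruth1 (0, 1) (1 / 2) 1 0).trans consistent
  have far_from_one : 1 / 2 - δ / 2 ≤ ∫ y, |y - 1| ∂(f (1 / 2, 3 / 2) (0, 1)) := by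
    have h := abs_sub_le_integral_abs_sub_add_integral_abs_sub (hmom (1 / 2, 1) (0, 1)) (1 / 2) 1
    norm_num at h
    linarith [htruth2 (0, 1) (1 / 2) 1 (3 / 2)]
  rw [integral_max_abs_sub_eq (hmom _ _) (by norm_num)]
  norm_num
  linarith

/-- lower bound on the robustness of any `(1+δ)`-consistent randomized
truthful-in-expectation learning-augmented mechanism for two agents on the line,
augmented with a prediction of both agents' locations. -/
theorem stmt0
    (δ : ℝ) (hδ : δ ∈ Set.Icc (0 : ℝ) (1 / 2))
    (f : ℝ × ℝ → ℝ × ℝ → Measure ℝ)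
    (hprob : ∀ x p, IsProbabilityMeasure (f x p))
    (hmom : ∀ x p, Integrable (fun y => |y|) (f x p))
    (hanon : ∀ x₁ x₂ p₁ p₂ : ℝ, f (x₁, x₂) (p₁, p₂) = f (x₂, x₁) (p₂, p₁))
    (htruth1 : ∀ (p : ℝ × ℝ) (x₁ x₂ x₁' : ℝ),
      ∫ y, |y - x₁| ∂(f (x₁, x₂) p) ≤ ∫ y, |y - x₁| ∂(f (x₁', x₂) p))
    (htruth2 : ∀ (p : ℝ × ℝ) (x₁ x₂ x₂' : ℝ),
      ∫ y, |y - x₂| ∂(f (x₁, x₂) p) ≤ ∫ y, |y - x₂| ∂(f (x₁, x₂') p))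
    (hcons : ∀ x : ℝ × ℝ,
      ∫ y, max |y - x.1| |y - x.2| ∂(f x x) ≤ (1 + δ) * (|x.1 - x.2| / 2)) :
    ∃ x p : ℝ × ℝ, 0 < |x.1 - x.2| / 2 ∧
      (2 - δ) * (|x.1 - x.2| / 2) ≤ ∫ y, max |y - x.1| |y - x.2| ∂(f x p) :=
  stmt0_general δ f hprob hmom htruth1 htruth2 hcons
end

section
/- Let f be a randomized mechanism for two agents on the line that is truthful in expectation. Then there exists a randomized mechanism f′ for two agents on the line that is truthful in expectation, is an OnlyM mechanism, and satisfies C(f′,x) = C(f,x) for every profile x; in particular, f′ achieves the same approximation guarantee as f on every instance. -/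
open MeasureTheory

/-- The expected egalitarian social cost of the randomized facility location `μ`
on the two-agent profile `x`. -/
noncomputable def egalCost (μ : Measure ℝ) (x : ℝ × ℝ) : ℝ :=
  ∫ y, max |y - x.1| |y - x.2| ∂μ

/-- A randomized mechanism for two agents on the line is truthful in expectation. -/
def TruthfulInExpectation (f : ℝ × ℝ → Measure ℝ) : Prop :=
  (∀ x₁ x₂ x₁' : ℝ,
    ∫ y, |y - x₁| ∂(f (x₁, x₂)) ≤ ∫ y, |y - x₁| ∂(f (x₁', x₂))) ∧
  (∀ x₁ x₂ x₂' : ℝ,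
    ∫ y, |y - x₂| ∂(f (x₁, x₂)) ≤ ∫ y, |y - x₂| ∂(f (x₁, x₂')))

/-- An OnlyM mechanism: with probability `1`, any returned location lying strictly
between the two reports equals the midpoint `M`. -/
def IsOnlyM (f : ℝ × ℝ → Measure ℝ) : Prop :=
  ∀ x : ℝ × ℝ,
    f x (Set.Ioo (min x.1 x.2) (max x.1 x.2) \ {(x.1 + x.2) / 2}) = 0

/-!
Inside the open interval `(L, R)` spanned by the reports, send every location `y` to the two
neighbouring points among `L`, `M`, `R`, with the weights that make `y` their barycentre. This
mean-preserving spread cannot decrease the expectation of a convex function such as `|· - t|`,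
so misreporting never becomes more attractive, while it leaves unchanged the expectation of any
function affine on `[L, M]` and on `[M, R]`: the distance to either report, and the egalitarian
cost `max |y - x₁| |y - x₂| = |y - M| + |x₁ - x₂| / 2`.
-/

open Set

noncomputable def chord (φ : ℝ → ℝ) (a b y : ℝ) : ℝ :=
  (b - y) / (b - a) * φ a + (y - a) / (b - a) * φ b

lemma continuous_chord (φ : ℝ → ℝ) (a b : ℝ) : Continuous (chord φ a b) := by
  unfold chord
  fun_prop

lemma ConvexOn.le_chord {φ : ℝ → ℝ} {a b y : ℝ} (hφ : ConvexOn ℝ (Icc a b) φ)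
    (hy : y ∈ Ioo a b) : φ y ≤ chord φ a b y := by
  obtain ⟨hay, hyb⟩ := hy
  have hab : 0 < b - a := by linarith
  have key := hφ.2 (left_mem_Icc.2 (by linarith)) (right_mem_Icc.2 (by linarith))
    (div_nonneg (by linarith : 0 ≤ b - y) hab.le) (div_nonneg (by linarith : 0 ≤ y - a) hab.le)
    (by field_simp; ring)
  have hcomb : ((b - y) / (b - a)) • a + ((y - a) / (b - a)) • b = y := by
    simp only [smul_eq_mul]
    field_simp
    ring
  rw [hcomb] at key
  exact key

lemma chord_abs_sub {a b y t : ℝ} (hy : y ∈ Ioo a b) (ht : t ∉ Ioo a b) :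
    chord (|· - t|) a b y = |y - t| := by
  obtain ⟨hay, hyb⟩ := hy
  have hab : b - a ≠ 0 := by linarith
  simp only [chord]
  rcases le_or_gt t a with hta | hat
  · rw [abs_of_nonneg (by linarith : 0 ≤ a - t), abs_of_nonneg (by linarith : 0 ≤ b - t),
      abs_of_nonneg (by linarith : 0 ≤ y - t)]
    field_simp
    ring
  · have htb : b ≤ t := not_lt.1 fun h => ht ⟨hat, h⟩
    rw [abs_of_nonpos (by linarith : a - t ≤ 0), abs_of_nonpos (by linarith : b - t ≤ 0),
      abs_of_nonpos (by linarith : y - t ≤ 0)]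
    field_simp
    ring

lemma convexOn_univ_abs_sub (t : ℝ) : ConvexOn ℝ univ (|· - t|) := by
  have := (convexOn_univ_norm (E := ℝ)).translate_right (-t)
  simpa [Function.comp_def, neg_add_eq_sub] using this

lemma max_abs_sub_abs_sub (y a b : ℝ) :
    max |y - a| |y - b| = |y - (a + b) / 2| + |a - b| / 2 := by
  rcases abs_cases (y - a) with ⟨h1, _⟩ | ⟨h1, _⟩ <;>
    rcases abs_cases (y - b) with ⟨h2, _⟩ | ⟨h2, _⟩ <;>
    rcases abs_cases (y - (a + b) / 2) with ⟨h3, _⟩ | ⟨h3, _⟩ <;>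
    rcases abs_cases (a - b) with ⟨h4, _⟩ | ⟨h4, _⟩ <;>
    rw [h1, h2, h3, h4, max_def] <;> split_ifs <;> linarith

lemma integrable_abs_sub {μ : Measure ℝ} [IsFiniteMeasure μ] (hμ : Integrable (fun y => |y|) μ)
    (t : ℝ) : Integrable (fun y => |y - t|) μ :=
  (((integrable_norm_iff measurable_id.aestronglyMeasurable).1 hμ).sub
    (integrable_const t)).abs

/-- Each `y ∈ (a, b)` is split between `a` and `b` with its barycentric weights. When `b ≤ a` the
interval is empty and `sweep μ a b = μ`. -/
noncomputable def sweep (μ : Measure ℝ) (a b : ℝ) : Measure ℝ :=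
  μ.restrict (Ioo a b)ᶜ
    + (∫ y in Ioo a b, (b - y) / (b - a) ∂μ).toNNReal • Measure.dirac a
    + (∫ y in Ioo a b, (y - a) / (b - a) ∂μ).toNNReal • Measure.dirac b

section Sweep

variable {μ : Measure ℝ} {a b : ℝ}

instance [IsFiniteMeasure μ] : IsFiniteMeasure (sweep μ a b) := by
  unfold sweep
  infer_instance

lemma integrable_sweep {φ : ℝ → ℝ} (hφ : Integrable φ μ) : Integrable φ (sweep μ a b) :=
  (hφ.restrict.add_measure (integrable_dirac (by simp)).smul_measure_nnreal).add_measure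
    (integrable_dirac (by simp)).smul_measure_nnreal

lemma integral_sweep [IsFiniteMeasure μ] {φ : ℝ → ℝ} (hφ : Integrable φ μ) :
    ∫ y, φ y ∂(sweep μ a b) =
      ∫ y in (Ioo a b)ᶜ, φ y ∂μ + ∫ y in Ioo a b, chord φ a b y ∂μ := by
  have hweight : ∀ g : ℝ → ℝ, Continuous g → (∀ y ∈ Ioo a b, 0 ≤ g y) →
      IntegrableOn g (Ioo a b) μ ∧ (∫ y in Ioo a b, g y ∂μ).toNNReal = ∫ y in Ioo a b, g y ∂μ :=
    fun g hg hg0 => ⟨hg.integrableOn_Icc.mono_set Ioo_subset_Icc_self,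
      Real.coe_toNNReal _ (setIntegral_nonneg measurableSet_Ioo hg0)⟩
  obtain ⟨hintL, hL⟩ := hweight (fun y => (b - y) / (b - a)) (by fun_prop)
    fun y hy => div_nonneg (by linarith [hy.2]) (by linarith [hy.1, hy.2])
  obtain ⟨hintR, hR⟩ := hweight (fun y => (y - a) / (b - a)) (by fun_prop)
    fun y hy => div_nonneg (by linarith [hy.1]) (by linarith [hy.1, hy.2])
  have hdirac : ∀ (c : NNReal) (z : ℝ), Integrable φ (c • Measure.dirac z) := fun _ _ =>
    (integrable_dirac (by simp)).smul_measure_nnreal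
  unfold chord
  rw [sweep, integral_add_measure (hφ.restrict.add_measure (hdirac _ _)) (hdirac _ _),
    integral_add_measure hφ.restrict (hdirac _ _), integral_smul_nnreal_measure,
    integral_smul_nnreal_measure, integral_dirac, integral_dirac, NNReal.smul_def,
    NNReal.smul_def, hL, hR, smul_eq_mul, smul_eq_mul, add_assoc,
    integral_add (hintL.mul_const _) (hintR.mul_const _), integral_mul_const, integral_mul_const]

lemma integral_le_integral_sweep [IsFiniteMeasure μ] {φ : ℝ → ℝ}
    (hconv : ConvexOn ℝ (Icc a b) φ) (hφ : Integrable φ μ) :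
    ∫ y, φ y ∂μ ≤ ∫ y, φ y ∂(sweep μ a b) := by
  rw [integral_sweep hφ, ← integral_add_compl (measurableSet_Ioo (a := a) (b := b)) hφ, add_comm]
  exact add_le_add le_rfl (setIntegral_mono_on hφ.integrableOn
    ((continuous_chord φ a b).integrableOn_Icc.mono_set Ioo_subset_Icc_self) measurableSet_Ioo
    fun y hy => hconv.le_chord hy)

lemma integral_sweep_of_eqOn_chord [IsFiniteMeasure μ] {φ : ℝ → ℝ}
    (hchord : EqOn (chord φ a b) φ (Ioo a b)) (hφ : Integrable φ μ) :
    ∫ y, φ y ∂(sweep μ a b) = ∫ y, φ y ∂μ := by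
  rw [integral_sweep hφ, setIntegral_congr_fun measurableSet_Ioo hchord, add_comm,
    integral_add_compl measurableSet_Ioo hφ]

instance [IsProbabilityMeasure μ] : IsProbabilityMeasure (sweep μ a b) := by
  have h : ∫ _, (1 : ℝ) ∂(sweep μ a b) = ∫ _, (1 : ℝ) ∂μ :=
    integral_sweep_of_eqOn_chord (fun y hy => by
      have : b - a ≠ 0 := by linarith [hy.1, hy.2]
      simp only [chord]
      field_simp
      ring) (integrable_const 1)
  simp only [integral_const, smul_eq_mul, mul_one, probReal_univ] at h
  exact isProbabilityMeasure_iff_real.2 h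

lemma sweep_apply_eq_zero {s : Set ℝ} (hs : MeasurableSet s) (ha : a ∉ s) (hb : b ∉ s)
    (hμ : μ (s \ Ioo a b) = 0) : sweep μ a b s = 0 := by
  simp [sweep, Measure.restrict_apply hs, ha, hb, ← sdiff_eq, hμ]

end Sweep

noncomputable def midpointSweep (μ : Measure ℝ) (x : ℝ × ℝ) : Measure ℝ :=
  sweep (sweep μ (min x.1 x.2) ((x.1 + x.2) / 2)) ((x.1 + x.2) / 2) (max x.1 x.2)

section MidpointSweep

variable {μ : Measure ℝ}

instance [IsProbabilityMeasure μ] (x : ℝ × ℝ) : IsProbabilityMeasure (midpointSweep μ x) := by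
  unfold midpointSweep
  infer_instance

lemma integral_abs_sub_midpointSweep [IsFiniteMeasure μ] (hμ : Integrable (fun y => |y|) μ)
    {x : ℝ × ℝ} {t : ℝ}
    (ht : t ∉ Ioo (min x.1 x.2) (max x.1 x.2) \ {(x.1 + x.2) / 2}) :
    ∫ y, |y - t| ∂(midpointSweep μ x) = ∫ y, |y - t| ∂μ := by
  have hmin : min x.1 x.2 ≤ (x.1 + x.2) / 2 := by
    linarith [min_le_left x.1 x.2, min_le_right x.1 x.2]
  have hmax : (x.1 + x.2) / 2 ≤ max x.1 x.2 := by
    linarith [le_max_left x.1 x.2, le_max_right x.1 x.2]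
  have hleft : t ∉ Ioo (min x.1 x.2) ((x.1 + x.2) / 2) := fun h =>
    ht ⟨⟨h.1, h.2.trans_le hmax⟩, h.2.ne⟩
  have hright : t ∉ Ioo ((x.1 + x.2) / 2) (max x.1 x.2) := fun h =>
    ht ⟨⟨hmin.trans_lt h.1, h.2⟩, h.1.ne'⟩
  rw [midpointSweep,
    integral_sweep_of_eqOn_chord (fun y hy => chord_abs_sub hy hright)
      (integrable_sweep (integrable_abs_sub hμ t)),
    integral_sweep_of_eqOn_chord (fun y hy => chord_abs_sub hy hleft) (integrable_abs_sub hμ t)]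

lemma integral_abs_sub_le_midpointSweep [IsFiniteMeasure μ] (hμ : Integrable (fun y => |y|) μ)
    (x : ℝ × ℝ) (t : ℝ) :
    ∫ y, |y - t| ∂μ ≤ ∫ y, |y - t| ∂(midpointSweep μ x) :=
  have hconv (a b : ℝ) : ConvexOn ℝ (Icc a b) (|· - t|) :=
    (convexOn_univ_abs_sub t).subset (subset_univ _) (convex_Icc a b)
  (integral_le_integral_sweep (hconv _ _) (integrable_abs_sub hμ t)).trans
    (integral_le_integral_sweep (hconv _ _) (integrable_sweep (integrable_abs_sub hμ t)))

lemma egalCost_midpointSweep [IsProbabilityMeasure μ] (hμ : Integrable (fun y => |y|) μ)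
    (x : ℝ × ℝ) : egalCost (midpointSweep μ x) x = egalCost μ x := by
  have hint := integrable_abs_sub hμ ((x.1 + x.2) / 2)
  have hint' : Integrable (fun y => |y - (x.1 + x.2) / 2|) (midpointSweep μ x) :=
    integrable_sweep (integrable_sweep hint)
  simp only [egalCost, max_abs_sub_abs_sub]
  rw [integral_add hint' (integrable_const _),
    integral_add hint (integrable_const _),
    integral_abs_sub_midpointSweep hμ fun h => h.2 rfl, integral_const, integral_const,
    probReal_univ, probReal_univ]

lemma midpointSweep_apply_eq_zero (μ : Measure ℝ) (x : ℝ × ℝ) :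
    midpointSweep μ x (Ioo (min x.1 x.2) (max x.1 x.2) \ {(x.1 + x.2) / 2}) = 0 := by
  unfold midpointSweep
  set L := min x.1 x.2
  set M := (x.1 + x.2) / 2
  set R := max x.1 x.2
  have hs : MeasurableSet (Ioo L R \ {M}) := measurableSet_Ioo.diff (measurableSet_singleton _)
  have hempty : ((Ioo L R \ {M}) \ Ioo M R) \ Ioo L M = ∅ :=
    eq_empty_of_forall_notMem fun y ⟨⟨⟨⟨hLy, hyR⟩, hyM⟩, hMR⟩, hLM⟩ =>
      (lt_or_gt_of_ne hyM).elim (fun h => hLM ⟨hLy, h⟩) fun h => hMR ⟨h, hyR⟩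
  exact sweep_apply_eq_zero hs (fun h => h.2 rfl) (fun h => h.1.2.false)
    (sweep_apply_eq_zero (hs.diff measurableSet_Ioo) (fun h => h.1.1.1.false) (fun h => h.1.2 rfl)
      (by rw [hempty, measure_empty]))

end MidpointSweep

/-- any truthful-in-expectation randomized mechanism for two agents on the
line can be converted to a truthful-in-expectation OnlyM mechanism with the same expected
egalitarian social cost on every profile. -/
theorem stmt1 (f : ℝ × ℝ → Measure ℝ)
    (hprob : ∀ x, IsProbabilityMeasure (f x))
    (hmom : ∀ x, Integrable (fun y => |y|) (f x))
    (htruth : TruthfulInExpectation f) :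
    ∃ f' : ℝ × ℝ → Measure ℝ,
      (∀ x, IsProbabilityMeasure (f' x)) ∧
      (∀ x, Integrable (fun y => |y|) (f' x)) ∧
      TruthfulInExpectation f' ∧
      IsOnlyM f' ∧
      ∀ x, egalCost (f' x) x = egalCost (f x) x := by
  refine ⟨fun x => midpointSweep (f x) x, fun x => inferInstance,
    fun x => integrable_sweep (integrable_sweep (hmom x)),
    ⟨fun x₁ x₂ x₁' => ?_, fun x₁ x₂ x₂' => ?_⟩,
    fun x => midpointSweep_apply_eq_zero (f x) x, fun x => egalCost_midpointSweep (hmom x) x⟩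
  · calc ∫ y, |y - x₁| ∂midpointSweep (f (x₁, x₂)) (x₁, x₂)
        = ∫ y, |y - x₁| ∂f (x₁, x₂) :=
          integral_abs_sub_midpointSweep (hmom _) fun h => left_notMem_uIoo h.1
      _ ≤ ∫ y, |y - x₁| ∂f (x₁', x₂) := htruth.1 x₁ x₂ x₁'
      _ ≤ _ := integral_abs_sub_le_midpointSweep (hmom _) _ _
  · calc ∫ y, |y - x₂| ∂midpointSweep (f (x₁, x₂)) (x₁, x₂)
        = ∫ y, |y - x₂| ∂f (x₁, x₂) :=
          integral_abs_sub_midpointSweep (hmom _) fun h => right_notMem_uIoo h.1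
      _ ≤ ∫ y, |y - x₂| ∂f (x₁, x₂') := htruth.2 x₁ x₂ x₂'
      _ ≤ _ := integral_abs_sub_le_midpointSweep (hmom _) _ _
end

section
/- Let f be a deterministic learning-augmented mechanism for two agents on the line that receives a profile (x₁,x₂) ∈ ℝ² together with a prediction x̂₁ ∈ ℝ of agent 1's location, outputs a point f((x₁,x₂), x̂₁) ∈ ℝ, and is truthful for every fixed prediction. Then f is not better than 2-consistent: there exists a profile (x₁,x₂) with x₁ ≠ x₂ such that, with the accurate prediction x̂₁ = x₁, the output y = f((x₁,x₂), x₁) satisfies max(|y−x₁|, |y−x₂|) ≥ 2·opt(x₁,x₂). -/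
/-!
Fix agent 1 at `0` and the prediction at `0`, and let `g t` be the output on the profile `(0, t)`.
Truthfulness of agent 2 says that `g t` is a point of the range of `g` closest to `t`, so `g` fixes
each of its values. Hence either `g 1 = 0`, or the profile `(0, g 1)` has output `g 1`: in both cases
the output is an endpoint of the profile, which costs the full distance `|x₁ - x₂| = 2 · opt`.
-/

theorem apply_apply_eq_of_dist_le {α : Type*} [MetricSpace α] {g : α → α}
    (hg : ∀ t t', dist (g t) t ≤ dist (g t') t) (t : α) : g (g t) = g t :=
  dist_le_zero.mp <| by simpa using hg (g t) t

theorem abs_sub_le_max_of_eq_or_eq {a b y : ℝ} (hy : y = a ∨ y = b) :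
    |a - b| ≤ max |y - a| |y - b| := by
  rcases hy with rfl | rfl
  · exact le_max_right _ _
  · exact le_max_of_le_left (abs_sub_comm _ _).le

theorem stmt6_general (f : ℝ × ℝ → ℝ → ℝ)
    (htruth2 : ∀ (p : ℝ) (x₁ x₂ x₂' : ℝ),
      |f (x₁, x₂) p - x₂| ≤ |f (x₁, x₂') p - x₂|) :
    ∃ x₁ x₂ : ℝ, x₁ ≠ x₂ ∧
      2 * (|x₁ - x₂| / 2) ≤ max |f (x₁, x₂) x₁ - x₁| |f (x₁, x₂) x₁ - x₂| := by
  set g : ℝ → ℝ := fun t ↦ f (0, t) 0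
  have hfix : g (g 1) = g 1 :=
    apply_apply_eq_of_dist_le (fun t t' ↦ by simpa only [Real.dist_eq] using htruth2 0 0 t t') 1
  simp only [mul_div_cancel₀ _ (two_ne_zero' ℝ)]
  by_cases h : g 1 = 0
  · exact ⟨0, 1, zero_ne_one, abs_sub_le_max_of_eq_or_eq (.inl h)⟩
  · exact ⟨0, g 1, Ne.symm h, abs_sub_le_max_of_eq_or_eq (.inr hfix)⟩

/-- no deterministic truthful mechanism for two agents on the line that is
augmented with a prediction of agent 1's location can be better than 2-consistent. -/
theorem stmt6 (f : ℝ × ℝ → ℝ → ℝ)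
    (htruth1 : ∀ (p : ℝ) (x₁ x₂ x₁' : ℝ),
      |f (x₁, x₂) p - x₁| ≤ |f (x₁', x₂) p - x₁|)
    (htruth2 : ∀ (p : ℝ) (x₁ x₂ x₂' : ℝ),
      |f (x₁, x₂) p - x₂| ≤ |f (x₁, x₂') p - x₂|) :
    ∃ x₁ x₂ : ℝ, x₁ ≠ x₂ ∧
      2 * (|x₁ - x₂| / 2) ≤ max |f (x₁, x₂) x₁ - x₁| |f (x₁, x₂) x₁ - x₂| :=
  stmt6_general f htruth2
end

section
/- Fix n ≥ 2 and let f be a randomized mechanism for n agents in the Euclidean plane that is truthful in expectation. Then f has approximation ratio at least √5/2 ≈ 1.118 for the egalitarian social cost: there exists a profile x ∈ (ℝ²)ⁿ with opt(x) > 0 such that C(f,x) ≥ (√5/2)·opt(x). -/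
/-!
Put one agent at `0` and all others at a unit vector `v`. The expected distances of the outcome
to `0` and to `v` sum to at least `1`, so one of them, say the one to the agent at `p`, is at least
`1/2`. Let that agent move one unit away from the others (to `-v`, resp. `2v`); by truthfulness the
expected distance of the new outcome to `p` is still at least `1/2`. Every reported point now lies
on the segment `[p - v, p + v]` with both ends occupied, so the optimal radius is `1`, while the
parallelogram law gives `√5 · max (dist y (p - v)) (dist y (p + v)) ≥ dist y p + 2` pointwise.
Integrating, the cost is at least `(1/2 + 2) / √5 = √5 / 2`.
-/

open MeasureTheory

section Normed

variable {E : Type*} [SeminormedAddCommGroup E] [NormedSpace ℝ E]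

theorem norm_le_max_dist_sub_add (c v y : E) : ‖v‖ ≤ max (dist y (c - v)) (dist y (c + v)) := by
  have hends : dist (c - v) (c + v) = 2 * ‖v‖ := by
    rw [dist_eq_norm, show c - v - (c + v) = -((2 : ℝ) • v) by module, norm_neg, norm_smul,
      Real.norm_two]
  have := dist_triangle_left (c - v) (c + v) y
  linarith [le_max_left (dist y (c - v)) (dist y (c + v)),
    le_max_right (dist y (c - v)) (dist y (c + v))]

theorem iInf_max_dist_sub_add (c v : E) :
    ⨅ y, max (dist y (c - v)) (dist y (c + v)) = ‖v‖ := by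
  refine le_antisymm ?_ (le_ciInf (norm_le_max_dist_sub_add c v))
  refine (ciInf_le ⟨‖v‖, Set.forall_mem_range.2 (norm_le_max_dist_sub_add c v)⟩ c).trans_eq ?_
  simp

theorem iSup_dist_eq_max_of_mem_segment {ι : Type*} [Finite ι] (x : ι → E) {a b : E}
    (hx : ∀ i, x i ∈ segment ℝ a b) (ha : a ∈ Set.range x) (hb : b ∈ Set.range x) (y : E) :
    ⨆ i, dist y (x i) = max (dist y a) (dist y b) := by
  obtain ⟨i, rfl⟩ := ha
  obtain ⟨j, rfl⟩ := hb
  have : Nonempty ι := ⟨i⟩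
  have hbdd := Finite.bddAbove_range fun i => dist y (x i)
  refine le_antisymm (ciSup_le fun k => ?_) (max_le (le_ciSup hbdd i) (le_ciSup hbdd j))
  simpa only [dist_comm y] using
    (convexOn_dist y convex_univ).le_on_segment trivial trivial (hx k)

end Normed

section Integrable

variable {E : Type*} [SeminormedAddCommGroup E] [MeasurableSpace E] [OpensMeasurableSpace E]
  {μ : Measure E}

theorem integrable_dist_const [IsFiniteMeasure μ] (hμ : Integrable (‖·‖) μ) (c : E) :
    Integrable (dist · c) μ := by
  refine (hμ.add (integrable_const ‖c‖)).mono' (by fun_prop) (.of_forall fun y => ?_)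
  simpa [dist_eq_norm] using norm_sub_le y c

theorem half_dist_le_integral_dist_or [IsProbabilityMeasure μ] (hμ : Integrable (‖·‖) μ)
    (p q : E) : dist p q / 2 ≤ ∫ y, dist y p ∂μ ∨ dist p q / 2 ≤ ∫ y, dist y q ∂μ := by
  have hp := integrable_dist_const hμ p
  have hq := integrable_dist_const hμ q
  have : dist p q ≤ ∫ y, dist y p ∂μ + ∫ y, dist y q ∂μ := by
    rw [← integral_add hp hq]
    simpa using integral_mono (integrable_const _) (hp.add hq) (dist_triangle_left p q)
  by_contra! h
  linarith [h.1, h.2]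

end Integrable

section InnerProduct

variable {E : Type*} [NormedAddCommGroup E] [InnerProductSpace ℝ E]

theorem dist_add_two_mul_norm_le_sqrt_five_mul_max_dist (c v y : E) :
    dist y c + 2 * ‖v‖ ≤ √5 * max (dist y (c - v)) (dist y (c + v)) := by
  set m := max (dist y (c - v)) (dist y (c + v))
  have hpar : dist y (c - v) ^ 2 + dist y (c + v) ^ 2 = 2 * (dist y c ^ 2 + ‖v‖ ^ 2) := by
    simpa only [dist_eq_norm, sub_add, sub_sub] using parallelogram_law_with_norm ℝ (y - c) v
  have hm : dist y (c - v) ^ 2 + dist y (c + v) ^ 2 ≤ 2 * m ^ 2 := by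
    have := pow_le_pow_left₀ dist_nonneg (le_max_left (dist y (c - v)) (dist y (c + v))) 2
    have := pow_le_pow_left₀ dist_nonneg (le_max_right (dist y (c - v)) (dist y (c + v))) 2
    linarith
  -- `(d + 2r)² ≤ 5 (d² + r²)` is `(2d - r)² ≥ 0`
  have hsq : (dist y c + 2 * ‖v‖) ^ 2 ≤ (√5 * m) ^ 2 := by
    rw [mul_pow, Real.sq_sqrt (by norm_num)]
    nlinarith [sq_nonneg (2 * dist y c - ‖v‖)]
  exact le_of_sq_le_sq hsq (by positivity)
variable [MeasurableSpace E] [OpensMeasurableSpace E] {μ : Measure E} [IsProbabilityMeasure μ]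

theorem sqrt_five_div_two_mul_norm_le_integral_max_dist (hμ : Integrable (‖·‖) μ) {c : E} (v : E)
    (hc : ‖v‖ / 2 ≤ ∫ y, dist y c ∂μ) :
    √5 / 2 * ‖v‖ ≤ ∫ y, max (dist y (c - v)) (dist y (c + v)) ∂μ := by
  have hmax : Integrable (fun y => max (dist y (c - v)) (dist y (c + v))) μ :=
    (integrable_dist_const hμ _).sup (integrable_dist_const hμ _)
  have key : ∫ y, dist y c ∂μ + 2 * ‖v‖ ≤ √5 * ∫ y, max (dist y (c - v)) (dist y (c + v)) ∂μ :=
    calc ∫ y, dist y c ∂μ + 2 * ‖v‖ = ∫ y, (dist y c + 2 * ‖v‖) ∂μ := by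
          rw [integral_add (integrable_dist_const hμ c) (integrable_const _)]; simp
      _ ≤ ∫ y, √5 * max (dist y (c - v)) (dist y (c + v)) ∂μ :=
          integral_mono ((integrable_dist_const hμ c).add (integrable_const _)) (hmax.const_mul _)
            (dist_add_two_mul_norm_le_sqrt_five_mul_max_dist c v)
      _ = √5 * ∫ y, max (dist y (c - v)) (dist y (c + v)) ∂μ := integral_const_mul _ _
  have h5 : √5 * (√5 / 2 * ‖v‖) = 5 / 2 * ‖v‖ := by
    linear_combination (‖v‖ / 2) * Real.mul_self_sqrt (by norm_num : (0 : ℝ) ≤ 5)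
  refine le_of_mul_le_mul_left ?_ (Real.sqrt_pos.2 (by norm_num : (0 : ℝ) < 5))
  linarith

theorem sqrt_five_div_two_mul_iInf_le_integral_iSup {ι : Type*} [Finite ι] (x : ι → E) {c v : E}
    (hv : v ≠ 0) (hx : ∀ i, x i ∈ segment ℝ (c - v) (c + v)) (hl : c - v ∈ Set.range x)
    (hr : c + v ∈ Set.range x) (hμ : Integrable (‖·‖) μ) (hc : ‖v‖ / 2 ≤ ∫ y, dist y c ∂μ) :
    0 < ⨅ y, ⨆ i, dist y (x i) ∧
      √5 / 2 * ⨅ y, ⨆ i, dist y (x i) ≤ ∫ y, ⨆ i, dist y (x i) ∂μ := by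
  simp_rw [iSup_dist_eq_max_of_mem_segment x hx hl hr, iInf_max_dist_sub_add]
  exact ⟨norm_pos_iff.2 hv, sqrt_five_div_two_mul_norm_le_integral_max_dist hμ v hc⟩

end InnerProduct

/-- any randomized truthful-in-expectation mechanism for `n ≥ 2` agents in
the Euclidean plane has approximation ratio at least `√5/2 ≈ 1.118` for the egalitarian
social cost. Here `opt x = ⨅ y, ⨆ i, dist y (x i)` is the radius of the minimum
enclosing circle, and the cost of the mechanism is `∫ y, ⨆ i, dist y (x i) ∂(f x)`. -/
theorem stmt9 (n : ℕ) (hn : 2 ≤ n)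
    (f : (Fin n → EuclideanSpace ℝ (Fin 2)) → Measure (EuclideanSpace ℝ (Fin 2)))
    (hprob : ∀ x, IsProbabilityMeasure (f x))
    (hmom : ∀ x, Integrable (fun y => ‖y‖) (f x))
    (htruth : ∀ (x : Fin n → EuclideanSpace ℝ (Fin 2)) (i : Fin n)
        (x' : EuclideanSpace ℝ (Fin 2)),
      ∫ y, dist y (x i) ∂(f x) ≤ ∫ y, dist y (x i) ∂(f (Function.update x i x'))) :
    ∃ x : Fin n → EuclideanSpace ℝ (Fin 2),
      0 < (⨅ y : EuclideanSpace ℝ (Fin 2), ⨆ i, dist y (x i)) ∧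
      (Real.sqrt 5 / 2) * (⨅ y : EuclideanSpace ℝ (Fin 2), ⨆ i, dist y (x i))
        ≤ ∫ y, (⨆ i, dist y (x i)) ∂(f x) := by
  let i₀ : Fin n := ⟨0, by omega⟩
  let i₁ : Fin n := ⟨1, by omega⟩
  have hi : i₁ ≠ i₀ := by simp [i₀, i₁, Fin.ext_iff]
  let v : EuclideanSpace ℝ (Fin 2) := EuclideanSpace.single 0 1
  have hv : v ≠ 0 := by simp [v]
  let x := Function.update (fun _ => v) i₀ 0
  have deviate : ∀ i w, ‖v‖ / 2 ≤ ∫ y, dist y (x i) ∂f x →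
      (∀ j, Function.update x i w j ∈ segment ℝ (x i - v) (x i + v)) →
      x i - v ∈ Set.range (Function.update x i w) → x i + v ∈ Set.range (Function.update x i w) →
      ∃ x : Fin n → EuclideanSpace ℝ (Fin 2), 0 < (⨅ y, ⨆ i, dist y (x i)) ∧
        √5 / 2 * (⨅ y, ⨆ i, dist y (x i)) ≤ ∫ y, (⨆ i, dist y (x i)) ∂f x := by
    intro i w hμ hseg hl hr
    have := hprob (Function.update x i w)
    exact ⟨_, sqrt_five_div_two_mul_iInf_le_integral_iSup _ hv hseg hl hr (hmom _)
      (hμ.trans (htruth x i w))⟩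
  have := hprob x
  have hx₀ : x i₀ = 0 := by simp [x]
  have hx₁ : x i₁ = v := by simp [x, hi]
  rcases half_dist_le_integral_dist_or (hmom x) (x i₀) (x i₁) with h | h
  · refine deviate i₀ (-v) (by simpa [hx₀, hx₁] using h) (fun j => ?_) ⟨i₀, by simp [hx₀]⟩
      ⟨i₁, by simp [hi, x]⟩
    rcases eq_or_ne j i₀ with rfl | hj
    · simpa [hx₀] using left_mem_segment ℝ (0 - v) (0 + v)
    · simpa [hj, hx₀, x] using right_mem_segment ℝ (0 - v) (0 + v)
  · refine deviate i₁ (v + v) (by simpa [hx₀, hx₁] using h) (fun j => ?_)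
      ⟨i₀, by simp [hx₁, hi.symm, x]⟩ ⟨i₁, by simp [hx₁]⟩
    rcases eq_or_ne j i₁ with rfl | hj₁
    · simpa [hx₁] using right_mem_segment ℝ (v - v) (v + v)
    rcases eq_or_ne j i₀ with rfl | hj₀
    · simpa [hi.symm, hx₁, x] using left_mem_segment ℝ (v - v) (v + v)
    · simpa [hj₁, hj₀, hx₁, x] using mem_segment_sub_add (𝕜 := ℝ) v v
end

section
/- Let a, b ∈ ℝ², let m = (a+b)/2 be their midpoint, let c = ‖a−b‖/2, and let μ be a Borel probability measure on ℝ² with finite first moments. Then ∫ max(‖y−a‖, ‖y−b‖) dμ(y) ≥ √( (∫ ‖y−m‖ dμ(y))² + c² ). In particular, if a randomized facility location has expected distance at least Δ from the midpoint of two agents at distance 2c, then its expected egalitarian social cost for these two agents is at least √(Δ² + c²). -/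
/-!
Apollonius' theorem gives `‖y - m‖² + c² = (‖y - a‖² + ‖y - b‖²) / 2 ≤ max (‖y - a‖, ‖y - b‖)²`,
so the cost at `y` dominates the modulus of the complex number `‖y - m‖ + c i`. Integrating, the
modulus of the mean is at most the mean of the moduli, and the mean of `‖y - m‖ + c i` is `Δ + c i`.
-/

open MeasureTheory

theorem sqrt_dist_midpoint_sq_add_half_dist_sq_le_max {V P : Type*} [NormedAddCommGroup V]
    [InnerProductSpace ℝ V] [MetricSpace P] [NormedAddTorsor V P] (a b y : P) :
    √(dist y (midpoint ℝ a b) ^ 2 + (dist a b / 2) ^ 2) ≤ max (dist y a) (dist y b) := by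
  have apollonius :=
    EuclideanGeometry.dist_sq_add_dist_sq_eq_two_mul_dist_midpoint_sq_add_half_dist_sq y a b
  refine Real.sqrt_le_iff.mpr ⟨le_max_of_le_left dist_nonneg, ?_⟩
  rcases le_total (dist y a) (dist y b) with h | h
  · rw [max_eq_right h]; nlinarith [dist_nonneg (x := y) (y := a)]
  · rw [max_eq_left h]; nlinarith [dist_nonneg (x := y) (y := b)]

theorem integrable_dist_of_integrable_norm {E : Type*} [NormedAddCommGroup E] [MeasurableSpace E]
    [OpensMeasurableSpace E] {μ : Measure E} [IsFiniteMeasure μ]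
    (hμ : Integrable (fun y => ‖y‖) μ) (z : E) : Integrable (fun y => dist y z) μ := by
  refine (hμ.add (integrable_const ‖z‖)).mono'
    (continuous_id.dist continuous_const).aestronglyMeasurable (ae_of_all _ fun y => ?_)
  simpa [dist_eq_norm] using norm_sub_le y z

theorem sqrt_sq_integral_add_sq_le_integral {α : Type*} [MeasurableSpace α] {μ : Measure α}
    [IsProbabilityMeasure μ] {f : α → ℝ} (hf : Integrable f μ) (c : ℝ) :
    √((∫ x, f x ∂μ) ^ 2 + c ^ 2) ≤ ∫ x, √(f x ^ 2 + c ^ 2) ∂μ := by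
  have hmean : ∫ x, ((f x : ℂ) + c * Complex.I) ∂μ = (∫ x, f x ∂μ : ℝ) + c * Complex.I := by
    rw [integral_add hf.ofReal (integrable_const _), integral_complex_ofReal, integral_const,
      probReal_univ, one_smul]
  simpa only [hmean, Complex.norm_add_mul_I] using
    norm_integral_le_integral_norm (μ := μ) (fun x => (f x : ℂ) + c * Complex.I)

/-- for two agents at `a` and `b` in the Euclidean plane with midpoint
`m = (a+b)/2` and `c = ‖a-b‖/2`, the expected egalitarian social cost of any randomized
facility location `μ` is at least `√(Δ² + c²)`, where `Δ` is the expected distance of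
the facility from the midpoint. -/
theorem stmt10 (a b : EuclideanSpace ℝ (Fin 2))
    (μ : Measure (EuclideanSpace ℝ (Fin 2)))
    (hprob : IsProbabilityMeasure μ) (hmom : Integrable (fun y => ‖y‖) μ) :
    Real.sqrt ((∫ y, dist y (midpoint ℝ a b) ∂μ) ^ 2 + (dist a b / 2) ^ 2)
      ≤ ∫ y, max (dist y a) (dist y b) ∂μ := by
  have hmax : Integrable (fun y => max (dist y a) (dist y b)) μ :=
    (integrable_dist_of_integrable_norm hmom a).sup (integrable_dist_of_integrable_norm hmom b)
  calc Real.sqrt ((∫ y, dist y (midpoint ℝ a b) ∂μ) ^ 2 + (dist a b / 2) ^ 2)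
      ≤ ∫ y, √(dist y (midpoint ℝ a b) ^ 2 + (dist a b / 2) ^ 2) ∂μ :=
        sqrt_sq_integral_add_sq_le_integral (integrable_dist_of_integrable_norm hmom _) _
    _ ≤ ∫ y, max (dist y a) (dist y b) ∂μ :=
        integral_mono_of_nonneg (ae_of_all _ fun _ => Real.sqrt_nonneg _) hmax
          (ae_of_all _ fun y => sqrt_dist_midpoint_sq_add_half_dist_sq_le_max a b y)
end

section
/- Let p₁, p₂, p₃, O ∈ ℝ² and R > 0 satisfy ‖pᵢ − O‖ = R for i = 1, 2, 3, and suppose O lies in the convex hull of {p₁, p₂, p₃}. Then the centroid G = (p₁+p₂+p₃)/3 satisfies ‖G − O‖ ≤ R/3. -/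
/-!
Put `uᵢ = pᵢ - O` and write `O = a₁ p₁ + a₂ p₂ + a₃ p₃` as a convex combination, so that
`∑ aᵢ uᵢ = 0`. Pairing this relation with each `uⱼ` and using `‖uᵢ‖ = R` yields the identity
`R² (R² - ‖u₁ + u₂ + u₃‖²) = 4 ∑_{i<j} aᵢ aⱼ (R⁴ - ⟪uᵢ, uⱼ⟫²)`,
whose right-hand side is nonnegative by Cauchy–Schwarz. Hence `‖u₁ + u₂ + u₃‖ ≤ R`
(the orthocenter `O + u₁ + u₂ + u₃` lies in the circumdisk), and `3 (G - O) = u₁ + u₂ + u₃`.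
-/

open RealInnerProductSpace

theorem exists_weights_of_mem_convexHull_triple {𝕜 E : Type*} [Field 𝕜] [LinearOrder 𝕜]
    [IsStrictOrderedRing 𝕜] [AddCommGroup E] [Module 𝕜 E] {x p₁ p₂ p₃ : E}
    (hx : x ∈ convexHull 𝕜 {p₁, p₂, p₃}) :
    ∃ a b c : 𝕜, 0 ≤ a ∧ 0 ≤ b ∧ 0 ≤ c ∧ a + b + c = 1 ∧ a • p₁ + b • p₂ + c • p₃ = x := by
  rw [convexHull_insert (Set.insert_nonempty _ _), convexHull_pair, mem_convexJoin] at hx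
  obtain ⟨_, rfl, _, ⟨u, v, hu, hv, huv, rfl⟩, t, s, ht, hs, hts, rfl⟩ := hx
  refine ⟨t, s * u, s * v, ht, mul_nonneg hs hu, mul_nonneg hs hv, ?_, ?_⟩
  · linear_combination s * huv + hts
  · simp only [smul_add, smul_smul, add_assoc]

section InnerProductSpace

variable {V : Type*} [NormedAddCommGroup V] [InnerProductSpace ℝ V]

theorem real_inner_sq_le_of_norm_eq {u v : V} {R : ℝ} (hu : ‖u‖ = R) (hv : ‖v‖ = R) :
    ⟪u, v⟫ ^ 2 ≤ R ^ 4 :=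
  calc ⟪u, v⟫ ^ 2 = |⟪u, v⟫| ^ 2 := (sq_abs _).symm
    _ ≤ (R * R) ^ 2 := by
      gcongr
      simpa only [hu, hv] using abs_real_inner_le_norm u v
    _ = R ^ 4 := by ring

theorem sq_mul_sub_norm_add_add_sq {u₁ u₂ u₃ : V} {R a b c : ℝ}
    (h₁ : ‖u₁‖ = R) (h₂ : ‖u₂‖ = R) (h₃ : ‖u₃‖ = R) (habc : a + b + c = 1)
    (hw : a • u₁ + b • u₂ + c • u₃ = 0) :
    R ^ 2 * (R ^ 2 - ‖u₁ + u₂ + u₃‖ ^ 2) =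
      4 * (a * b * (R ^ 4 - ⟪u₁, u₂⟫ ^ 2) + a * c * (R ^ 4 - ⟪u₁, u₃⟫ ^ 2) +
        b * c * (R ^ 4 - ⟪u₂, u₃⟫ ^ 2)) := by
  have e : ∀ v : V, a * ⟪u₁, v⟫ + b * ⟪u₂, v⟫ + c * ⟪u₃, v⟫ = 0 := fun v => by
    simpa only [inner_add_left, real_inner_smul_left, inner_zero_left] using congrArg (⟪·, v⟫) hw
  have e₁ := e u₁
  have e₂ := e u₂
  have e₃ := e u₃
  simp only [real_inner_self_eq_norm_sq, h₁, h₂, h₃, real_inner_comm u₁ u₂, real_inner_comm u₁ u₃,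
    real_inner_comm u₂ u₃] at e₁ e₂ e₃
  rw [norm_add_sq_real, norm_add_sq_real, inner_add_left, h₁, h₂, h₃]
  set r := R ^ 2
  set x := ⟪u₁, u₂⟫
  set y := ⟪u₁, u₃⟫
  set z := ⟪u₂, u₃⟫
  rw [show R ^ 4 = r ^ 2 by ring]
  -- Combines `r (r + x + y + z) = 2 a (r z - x y)` with `b (r z - x y) = -c (r² - y²)`,
  -- `c (r z - x y) = -b (r² - x²)` and their images under permuting the three points.
  linear_combination
    -2 * ((r * (a + 2 * b + 2 * c) + a * (z - x - y)) * e₁ +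
      (r * (2 * a + b + 2 * c) + b * (y - x - z)) * e₂ +
      (r * (2 * a + 2 * b + c) + c * (x - y - z)) * e₃ -
      (a + b + c + 1) * r * (r + x + y + z) * habc)

theorem norm_add_add_le_of_convex_combination_eq_zero {u₁ u₂ u₃ : V} {R a b c : ℝ}
    (h₁ : ‖u₁‖ = R) (h₂ : ‖u₂‖ = R) (h₃ : ‖u₃‖ = R)
    (ha : 0 ≤ a) (hb : 0 ≤ b) (hc : 0 ≤ c) (habc : a + b + c = 1)
    (hw : a • u₁ + b • u₂ + c • u₃ = 0) :
    ‖u₁ + u₂ + u₃‖ ≤ R := by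
  obtain rfl | hR := (h₁ ▸ norm_nonneg u₁ : 0 ≤ R).eq_or_lt
  · simp_all only [norm_eq_zero, add_zero, norm_zero, le_refl]
  have hgram : 0 ≤ R ^ 2 * (R ^ 2 - ‖u₁ + u₂ + u₃‖ ^ 2) := by
    have h₁₂ := sub_nonneg.2 (real_inner_sq_le_of_norm_eq h₁ h₂)
    have h₁₃ := sub_nonneg.2 (real_inner_sq_le_of_norm_eq h₁ h₃)
    have h₂₃ := sub_nonneg.2 (real_inner_sq_le_of_norm_eq h₂ h₃)
    rw [sq_mul_sub_norm_add_add_sq h₁ h₂ h₃ habc hw]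
    positivity
  have hsq : ‖u₁ + u₂ + u₃‖ ^ 2 ≤ R ^ 2 :=
    sub_nonneg.1 (nonneg_of_mul_nonneg_right hgram (by positivity))
  exact (pow_le_pow_iff_left₀ (norm_nonneg _) hR.le two_ne_zero).1 hsq

end InnerProductSpace

theorem stmt17_general (p₁ p₂ p₃ O : EuclideanSpace ℝ (Fin 2)) (R : ℝ)
    (h₁ : dist p₁ O = R) (h₂ : dist p₂ O = R) (h₃ : dist p₃ O = R)
    (hO : O ∈ convexHull ℝ {p₁, p₂, p₃}) :
    dist ((3⁻¹ : ℝ) • (p₁ + p₂ + p₃)) O ≤ R / 3 := by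
  obtain ⟨a, b, c, ha, hb, hc, habc, hcomb⟩ := exists_weights_of_mem_convexHull_triple hO
  rw [dist_eq_norm] at h₁ h₂ h₃
  have hw : a • (p₁ - O) + b • (p₂ - O) + c • (p₃ - O) = 0 := by
    linear_combination (norm := module) hcomb - habc • O
  have hG : (3⁻¹ : ℝ) • (p₁ + p₂ + p₃) - O = (3⁻¹ : ℝ) • ((p₁ - O) + (p₂ - O) + (p₃ - O)) := by
    module
  rw [dist_eq_norm, hG, norm_smul, Real.norm_of_nonneg (by norm_num), inv_mul_eq_div]
  gcongr
  exact norm_add_add_le_of_convex_combination_eq_zero h₁ h₂ h₃ ha hb hc habc hw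

/-- if `p₁, p₂, p₃` lie on the circle of center `O` and radius `R > 0` in
the Euclidean plane, and `O` lies in the convex hull of `{p₁, p₂, p₃}`, then their
centroid `G = (p₁+p₂+p₃)/3` satisfies `‖G - O‖ ≤ R/3`. -/
theorem stmt17 (p₁ p₂ p₃ O : EuclideanSpace ℝ (Fin 2)) (R : ℝ) (hR : 0 < R)
    (h₁ : dist p₁ O = R) (h₂ : dist p₂ O = R) (h₃ : dist p₃ O = R)
    (hO : O ∈ convexHull ℝ {p₁, p₂, p₃}) :
    dist ((3⁻¹ : ℝ) • (p₁ + p₂ + p₃)) O ≤ R / 3 :=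
  stmt17_general p₁ p₂ p₃ O R h₁ h₂ h₃ hO
end
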